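/- arXiv:2010.12122 — 8 statements merged into one kernel-verified Lean document; each statement's English description precedes it below -/
import Mathlib

section
/- Let S be a string, q ≥ 1, and let a ≤ c ≤ b ≤ d be positions within S such that the substrings S[a..b] and S[c..d] are both q-periodic and the overlap satisfies b − c + 1 ≥ q. Then the substring S[a..d] is q-periodic. -/
theorem periodic_glue_general {α : Type*} (S : ℕ → α) (q a b c d : ℕ)
    (hcb : c ≤ b)
    (hper1 : ∀ t, a ≤ t → t + q ≤ b → S t = S (t + q))
    (hper2 : ∀ t, c ≤ t → t + q ≤ d → S t = S (t + q))
    (hoverlap : q ≤ b - c + 1) :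
    ∀ t, a ≤ t → t + q ≤ d → S t = S (t + q) := by
  intro t hat htd
  by_cases htb : t + q ≤ b
  · exact hper1 t hat htb
  · exact hper2 t (by omega) htd

/-- If `S[a..b]` and `S[c..d]` are both `q`-periodic, with `a ≤ c ≤ b ≤ d` and
overlap `b - c + 1 ≥ q`, then `S[a..d]` is `q`-periodic. Strings are 1-indexed
functions `ℕ → α` with length `n`. -/
theorem periodic_glue {α : Type*} (S : ℕ → α) (n q a b c d : ℕ)
    (hq : 1 ≤ q) (ha : 1 ≤ a) (hac : a ≤ c) (hcb : c ≤ b) (hbd : b ≤ d)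
    (hdn : d ≤ n)
    (hper1 : ∀ t, a ≤ t → t + q ≤ b → S t = S (t + q))
    (hper2 : ∀ t, c ≤ t → t + q ≤ d → S t = S (t + q))
    (hoverlap : q ≤ b - c + 1) :
    ∀ t, a ≤ t → t + q ≤ d → S t = S (t + q) :=
  periodic_glue_general S q a b c d hcb hper1 hper2 hoverlap
end

section
/- Let P be a string of length m and S a string of length L with m ≤ L ≤ 2m, such that the prefix S[1..m] equals the reverse of P. Suppose P occurs as a substring of S at positions o < o' in S with o' − o < m, then S[1..o'+m−1] is (o'−o)-periodic. (An occurrence of P at position p means S[p..p+m−1] = P.) -/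
/-!
Both occurrences of `P` overlap in `S`, so `P` itself is `(o' - o)`-periodic, and hence so is
its reverse, the prefix `S[1..m]`. The two occurrences also make the window `S[o..o'+m-1]`
`(o' - o)`-periodic. Since `o' + m - 1 ≤ L ≤ 2m` forces `o' ≤ m + 1`, these two periodic windows
overlap in at least `o' - o` positions, which is enough to glue them into one periodic window
`S[1..o'+m-1]`.
-/

/-- `X[a..b]` is `q`-periodic. -/
def IsPeriodicOn {α : Type*} (X : ℕ → α) (a b q : ℕ) : Prop :=
  ∀ t, a ≤ t → t + q ≤ b → X t = X (t + q)

/-- `P[1..m]` occurs in `S` at position `o`. -/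
def OccursAt {α : Type*} (S P : ℕ → α) (m o : ℕ) : Prop :=
  ∀ t, t < m → S (o + t) = P (t + 1)

section

variable {α : Type*} {X Y S P : ℕ → α} {a b c d m o q : ℕ}

theorem IsPeriodicOn.congr (hY : IsPeriodicOn Y a b q) (hXY : ∀ t, a ≤ t → t ≤ b → X t = Y t) :
    IsPeriodicOn X a b q := by
  intro t hat htb
  rw [hXY t hat (by omega), hXY (t + q) (by omega) htb, hY t hat htb]

theorem IsPeriodicOn.reverse (hX : IsPeriodicOn X a b q) :
    IsPeriodicOn (fun t ↦ X (b + a - t)) a b q := by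
  intro t hat htb
  have h := hX (b + a - (t + q)) (by omega) (by omega)
  rw [show b + a - (t + q) + q = b + a - t by omega] at h
  exact h.symm

/-- Two `q`-periodic windows sharing at least `q` positions form one `q`-periodic window. -/
theorem IsPeriodicOn.glue (h₁ : IsPeriodicOn X a b q) (h₂ : IsPeriodicOn X c d q)
    (hcb : c + q ≤ b + 1) : IsPeriodicOn X a d q := by
  intro t hat htd
  by_cases htb : t + q ≤ b
  · exact h₁ t hat htb
  · exact h₂ t (by omega) htd

theorem OccursAt.isPeriodicOn_pattern (h : OccursAt S P m o) (h' : OccursAt S P m (o + q)) :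
    IsPeriodicOn P 1 m q := by
  intro c hc hcm
  have h₁ := h (c - 1 + q) (by omega)
  have h₂ := h' (c - 1) (by omega)
  rw [show o + (c - 1 + q) = o + q + (c - 1) by omega, h₂] at h₁
  rwa [show c - 1 + 1 = c by omega, show c - 1 + q + 1 = c + q by omega] at h₁

theorem OccursAt.isPeriodicOn_span (h : OccursAt S P m o) (h' : OccursAt S P m (o + q)) :
    IsPeriodicOn S o (o + q + m - 1) q := by
  intro t hot htq
  rcases Nat.eq_zero_or_pos q with rfl | hq
  · rfl
  have h₁ := h (t - o) (by omega)
  have h₂ := h' (t - o) (by omega)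
  rwa [show o + (t - o) = t by omega, ← h₂, show o + q + (t - o) = t + q by omega] at h₁

end

theorem overlapping_reverse_prefix_periodic_general {α : Type*} (S P : ℕ → α) (L m o o' : ℕ)
    (hL2m : L ≤ 2 * m)
    (hprefix : ∀ t, 1 ≤ t → t ≤ m → S t = P (m + 1 - t))
    (hoo' : o < o') (ho'L : o' + m - 1 ≤ L)
    (hocc : ∀ t, t < m → S (o + t) = P (t + 1))
    (hocc' : ∀ t, t < m → S (o' + t) = P (t + 1)) :
    ∀ t, 1 ≤ t → t + (o' - o) ≤ o' + m - 1 → S t = S (t + (o' - o)) := by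
  obtain ⟨q, rfl⟩ := Nat.exists_eq_add_of_le hoo'.le
  have hocc : OccursAt S P m o := hocc
  have hocc' : OccursAt S P m (o + q) := hocc'
  have hprefix_periodic : IsPeriodicOn S 1 m q :=
    (hocc.isPeriodicOn_pattern hocc').reverse.congr hprefix
  have hS : IsPeriodicOn S 1 (o + q + m - 1) q :=
    hprefix_periodic.glue (hocc.isPeriodicOn_span hocc') (by omega)
  rw [Nat.add_sub_cancel_left]
  exact hS

/-- Let `P` have length `m` and `S` have length `L` with `m ≤ L ≤ 2m`, such that
the prefix `S[1..m]` equals the reverse of `P`. If `P` occurs in `S` at positions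
`o < o'` with `o' - o < m`, then `S[1..o'+m-1]` is `(o'-o)`-periodic.
Strings are 1-indexed functions; an occurrence of `P` at position `p` means
`S (p + t) = P (t + 1)` for all `t < m`. -/
theorem overlapping_reverse_prefix_periodic {α : Type*} (S P : ℕ → α) (L m o o' : ℕ)
    (hm : 1 ≤ m) (hmL : m ≤ L) (hL2m : L ≤ 2 * m)
    (hprefix : ∀ t, 1 ≤ t → t ≤ m → S t = P (m + 1 - t))
    (ho : 1 ≤ o) (hoo' : o < o') (ho'm : o' - o < m) (ho'L : o' + m - 1 ≤ L)
    (hocc : ∀ t, t < m → S (o + t) = P (t + 1))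
    (hocc' : ∀ t, t < m → S (o' + t) = P (t + 1)) :
    ∀ t, 1 ≤ t → t + (o' - o) ≤ o' + m - 1 → S t = S (t + (o' - o)) :=
  overlapping_reverse_prefix_periodic_general S P L m o o' hL2m hprefix hoo' ho'L hocc hocc'
end

section
/- Let P be a string of length m and S a string of length L with m ≤ L ≤ 2m, such that the prefix S[1..m] equals the reverse of P. Let O = {p : 1 ≤ p ≤ L−m+1 and S[p..p+m−1] = P} be the set of occurrence positions of P in S, and suppose |O| ≥ 2. Let o_r = max O be the rightmost occurrence and o = max(O \ {o_r}) the second rightmost occurrence, and suppose o_r − o < m (the two rightmost occurrences overlap). Then O = { o_r − i·(o_r − o) : i a nonnegative integer with o_r − i·(o_r − o) ≥ 1 }. -/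
/-!
Two occurrences at distance `d` give `P` the period `d`. An occurrence at `q` overlaps the prefix
`S[1..m] = reverse P`, so `P[1..m+1-q]` is a palindrome; when its length is at least `d`, the
palindrome and the period together make `P x = P y` whenever `x + y ≡ m + 2 - q [MOD d]`. These
mirror symmetries are all that is needed to check that `o_r - e` is again an occurrence, both
for `e` a multiple of `d` and, if some occurrence `p` were off the progression, for
`e = (o_r - p) % d`, which would give an occurrence strictly between `o` and `o_r`.
-/

open ZMod

section

variable {α : Type*}

def IsOccurrence (S P : ℕ → α) (L m p : ℕ) : Prop :=
  1 ≤ p ∧ p ≤ L - m + 1 ∧ ∀ t < m, S (p + t) = P (t + 1)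

def IsMirrorMod (P : ℕ → α) (m d : ℕ) (c : ZMod d) : Prop :=
  ∀ x y, 1 ≤ x → x ≤ m → 1 ≤ y → y ≤ m → (x + y : ZMod d) = c → P x = P y

lemma exists_natCast_eq_of_pos {d : ℕ} (hd : 0 < d) (c : ZMod d) :
    ∃ x : ℕ, 1 ≤ x ∧ x ≤ d ∧ (x : ZMod d) = c := by
  have : NeZero d := ⟨hd.ne'⟩
  refine ⟨(c - 1).val + 1, le_add_self, (c - 1).val_lt, ?_⟩
  push_cast [natCast_zmod_val]
  ring

section Period

variable {P : ℕ → α} {m d : ℕ}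

lemma eq_add_mul_of_periodOn (hper : ∀ j, 1 ≤ j → j + d ≤ m → P (j + d) = P j)
    {x : ℕ} (hx : 1 ≤ x) : ∀ k, x + d * k ≤ m → P (x + d * k) = P x
  | 0, _ => rfl
  | k + 1, hk => by
    rw [mul_add_one, ← add_assoc] at hk ⊢
    rw [hper _ (by omega) hk]
    exact eq_add_mul_of_periodOn hper hx k (by omega)

lemma eq_of_natCast_eq_of_periodOn (hper : ∀ j, 1 ≤ j → j + d ≤ m → P (j + d) = P j)
    {x y : ℕ} (hx : 1 ≤ x) (hxm : x ≤ m) (hy : 1 ≤ y) (hym : y ≤ m)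
    (hxy : (x : ZMod d) = y) : P x = P y := by
  wlog hle : x ≤ y generalizing x y
  · exact (this hy hym hx hxm hxy.symm (by omega)).symm
  obtain ⟨k, hk⟩ := (Nat.modEq_iff_dvd' hle).mp ((natCast_eq_natCast_iff' x y d).mp hxy)
  obtain rfl : y = x + d * k := by omega
  exact (eq_add_mul_of_periodOn hper hx k hym).symm

lemma isMirrorMod_of_palindrome (hper : ∀ j, 1 ≤ j → j + d ≤ m → P (j + d) = P j)
    (hd : 0 < d) {n : ℕ} (hdn : d < n) (hnm : n ≤ m + 1)
    (hpal : ∀ i j, 1 ≤ i → 1 ≤ j → i + j = n → P i = P j) : IsMirrorMod P m d n := by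
  intro x y hx hxm hy hym hxy
  obtain ⟨x', hx', hx'd, hx'x⟩ := exists_natCast_eq_of_pos hd (x : ZMod d)
  have hsum : (n - x') + x' = n := by omega
  have hy' : ((n - x' : ℕ) : ZMod d) = y := by
    have := congrArg (Nat.cast : ℕ → ZMod d) hsum
    push_cast at this
    linear_combination this - hxy - hx'x
  calc P x = P x' := eq_of_natCast_eq_of_periodOn hper hx hxm hx' (by omega) hx'x.symm
    _ = P (n - x') := hpal _ _ hx' (by omega) (by omega)
    _ = P y := eq_of_natCast_eq_of_periodOn hper (by omega) (by omega) hy hym hy'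

end Period

-- Two reflections compose to a translation.
lemma IsMirrorMod.eq_of_natCast_eq_add_sub {P : ℕ → α} {m d : ℕ} {c₁ c₂ : ZMod d}
    (h₁ : IsMirrorMod P m d c₁) (h₂ : IsMirrorMod P m d c₂) (hd : 0 < d) (hdm : d ≤ m)
    {x y : ℕ} (hx : 1 ≤ x) (hxm : x ≤ m) (hy : 1 ≤ y) (hym : y ≤ m)
    (hxy : (x : ZMod d) = y + (c₁ - c₂)) : P x = P y := by
  obtain ⟨w, hw, hwd, hwc⟩ := exists_natCast_eq_of_pos hd (c₂ - y)
  calc P x = P w := h₁ x w hx hxm hw (by omega) (by rw [hxy, hwc]; ring)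
    _ = P y := h₂ w y hw (by omega) hy hym (by rw [hwc]; ring)

section Occurrence

variable {S P : ℕ → α} {L m : ℕ}

lemma IsOccurrence.le_add_one (hL : L ≤ 2 * m) {q : ℕ} (hq : IsOccurrence S P L m q) :
    q ≤ m + 1 := by
  have := hq.2.1
  omega

lemma IsOccurrence.sub_le (hL : L ≤ 2 * m) {q q' : ℕ} (hq : IsOccurrence S P L m q)
    (hq' : IsOccurrence S P L m q') : q' - q ≤ m := by
  have := hq.1
  have := hq'.le_add_one hL
  omega

lemma IsOccurrence.periodOn {q q' : ℕ} (hq : IsOccurrence S P L m q)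
    (hq' : IsOccurrence S P L m q') (hle : q ≤ q') :
    ∀ j, 1 ≤ j → j + (q' - q) ≤ m → P (j + (q' - q)) = P j := by
  intro j hj hjm
  have h := hq.2.2 (j + (q' - q) - 1) (by omega)
  have h' := hq'.2.2 (j - 1) (by omega)
  rw [show q + (j + (q' - q) - 1) = q' + (j - 1) by omega, h',
    show j + (q' - q) - 1 + 1 = j + (q' - q) by omega, show j - 1 + 1 = j by omega] at h
  exact h.symm

variable (hprefix : ∀ t, 1 ≤ t → t ≤ m → S t = P (m + 1 - t))
include hprefix

lemma IsOccurrence.palindrome {q : ℕ} (hq : IsOccurrence S P L m q) :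
    ∀ i j, 1 ≤ i → 1 ≤ j → i + j + q = m + 2 → P i = P j := by
  intro i j hi hj hij
  have hq1 := hq.1
  have h := hq.2.2 (i - 1) (by omega)
  rw [hprefix _ (by omega) (by omega), show i - 1 + 1 = i by omega,
    show m + 1 - (q + (i - 1)) = j by omega] at h
  exact h.symm

lemma IsOccurrence.isMirrorMod {q d : ℕ} (hq : IsOccurrence S P L m q)
    (hper : ∀ j, 1 ≤ j → j + d ≤ m → P (j + d) = P j) (hd : 0 < d) (hdq : d + q ≤ m + 1) :
    IsMirrorMod P m d (m + 2 - q) := by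
  have hcast : ((m + 2 - q : ℕ) : ZMod d) = m + 2 - q := by
    rw [Nat.cast_sub (by omega)]
    push_cast
    ring
  rw [← hcast]
  have hq1 := hq.1
  exact isMirrorMod_of_palindrome hper hd (by omega) (by omega)
    fun i j hi hj hij => hq.palindrome hprefix i j hi hj (by omega)

lemma IsOccurrence.sub {d o_r e : ℕ} (hL : L ≤ 2 * m) (hor : IsOccurrence S P L m o_r)
    (hd : 0 < d) (hdm : d ≤ m) (h₁ : IsMirrorMod P m d (m + 2 - o_r))
    (h₂ : IsMirrorMod P m d (m + 2 - o_r + e)) (he : e < o_r) :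
    IsOccurrence S P L m (o_r - e) := by
  have hor' := hor.le_add_one hL
  refine ⟨by omega, by have := hor.2.1; omega, fun t ht => ?_⟩
  rcases lt_or_ge t e with hte | hte
  · rw [hprefix _ (by omega) (by omega)]
    have hsum : (m + 1 - (o_r - e + t)) + (o_r - e) + t = m + 1 := by omega
    have hsub : (o_r - e) + e = o_r := by omega
    apply h₂ _ _ (by omega) (by omega) (by omega) (by omega)
    have h₁ := congrArg (Nat.cast : ℕ → ZMod d) hsum
    have h₂ := congrArg (Nat.cast : ℕ → ZMod d) hsub
    push_cast at h₁ h₂ ⊢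
    linear_combination h₁ - h₂
  · rw [show o_r - e + t = o_r + (t - e) by omega, hor.2.2 _ (by omega)]
    refine (h₂.eq_of_natCast_eq_add_sub h₁ hd hdm (x := t + 1) (y := t - e + 1)
      (by omega) ht (by omega) (by omega) ?_).symm
    rw [show t + 1 = (t - e + 1) + e by omega]
    push_cast
    ring

section TwoOccurrences

variable {o o_r : ℕ} (hL : L ≤ 2 * m) (ho : IsOccurrence S P L m o)
  (hor : IsOccurrence S P L m o_r) (holt : o < o_r)
include hL ho hor holt

lemma isMirrorMod_of_isOccurrence_le {q : ℕ} (hq : IsOccurrence S P L m q) (hqo : q ≤ o) :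
    IsMirrorMod P m (o_r - o) (m + 2 - q) :=
  hq.isMirrorMod hprefix (ho.periodOn hor holt.le) (by omega)
    (by have := hor.le_add_one hL; omega)

lemma isMirrorMod_rightmost : IsMirrorMod P m (o_r - o) (m + 2 - o_r) := by
  have hcast : ((o_r - o : ℕ) : ZMod (o_r - o)) = o_r - o := Nat.cast_sub holt.le
  rw [natCast_self] at hcast
  rw [show (o_r : ZMod (o_r - o)) = o by linear_combination -hcast]
  exact isMirrorMod_of_isOccurrence_le hprefix hL ho hor holt ho le_rfl

lemma isOccurrence_sub_mul {i : ℕ} (hi : i * (o_r - o) < o_r) :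
    IsOccurrence S P L m (o_r - i * (o_r - o)) := by
  have hmir := isMirrorMod_rightmost hprefix hL ho hor holt
  refine hor.sub hprefix hL (by omega) (ho.sub_le hL hor) hmir ?_ hi
  simpa [natCast_self] using hmir

lemma dvd_sub_of_isOccurrence (hsec : ∀ q, IsOccurrence S P L m q → q ≠ o_r → q ≤ o) {p : ℕ}
    (hp : IsOccurrence S P L m p) (hpo : p ≤ o) : o_r - o ∣ o_r - p := by
  have hd : 0 < o_r - o := by omega
  have hr := Nat.mod_lt (o_r - p) hd
  have hp1 := hp.1
  refine Nat.dvd_of_mod_eq_zero (by_contra fun hr0 => ?_)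
  have hmir : IsMirrorMod P m (o_r - o) (m + 2 - o_r + ((o_r - p) % (o_r - o) : ℕ)) := by
    rw [natCast_mod, Nat.cast_sub (by omega)]
    convert isMirrorMod_of_isOccurrence_le hprefix hL ho hor holt hp hpo using 1
    ring
  have hocc := hor.sub hprefix hL hd (ho.sub_le hL hor)
    (isMirrorMod_rightmost hprefix hL ho hor holt) hmir (by omega)
  have := hsec _ hocc (by omega)
  omega

end TwoOccurrences

end Occurrence

end

theorem occurrences_arith_progression_general {α : Type*} (S P : ℕ → α) (L m : ℕ) (O : Set ℕ)
    (hL2m : L ≤ 2 * m)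
    (hprefix : ∀ t, 1 ≤ t → t ≤ m → S t = P (m + 1 - t))
    (hO : O = {p : ℕ | 1 ≤ p ∧ p ≤ L - m + 1 ∧ ∀ t < m, S (p + t) = P (t + 1)})
    (o_r o : ℕ) (hor : o_r ∈ O) (ho : o ∈ O) (holt : o < o_r)
    (hsec : ∀ p ∈ O, p ≠ o_r → p ≤ o) :
    O = {p : ℕ | ∃ i : ℕ, i * (o_r - o) ≤ o_r - 1 ∧ p = o_r - i * (o_r - o)} := by
  change O = {p | IsOccurrence S P L m p} at hO
  subst hO
  ext p
  constructor
  · intro hp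
    by_cases hpr : p = o_r
    · exact ⟨0, by omega, by omega⟩
    have hpo := hsec p hp hpr
    obtain ⟨i, hi⟩ := dvd_sub_of_isOccurrence hprefix hL2m ho hor holt hsec hp hpo
    have hp1 := hp.1
    exact ⟨i, by rw [mul_comm, ← hi]; omega, by rw [mul_comm, ← hi]; omega⟩
  · rintro ⟨i, hi, rfl⟩
    exact isOccurrence_sub_mul hprefix hL2m ho hor holt (by omega)

/-- Let `P` have length `m` and `S` have length `L` with `m ≤ L ≤ 2m`, such that
the prefix `S[1..m]` equals the reverse of `P`. Let `O` be the set of occurrence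
positions of `P` in `S`, with at least two elements, rightmost occurrence `o_r`
and second rightmost `o`, overlapping (`o_r - o < m`). Then `O` is exactly the
arithmetic progression `{o_r - i•(o_r - o) : i ≥ 0, o_r - i•(o_r - o) ≥ 1}`. -/
theorem occurrences_arith_progression {α : Type*} (S P : ℕ → α) (L m : ℕ) (O : Set ℕ)
    (hm : 1 ≤ m) (hmL : m ≤ L) (hL2m : L ≤ 2 * m)
    (hprefix : ∀ t, 1 ≤ t → t ≤ m → S t = P (m + 1 - t))
    (hO : O = {p : ℕ | 1 ≤ p ∧ p ≤ L - m + 1 ∧ ∀ t < m, S (p + t) = P (t + 1)})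
    (o_r o : ℕ) (hor : o_r ∈ O) (ho : o ∈ O) (holt : o < o_r)
    (hmax : ∀ p ∈ O, p ≤ o_r) (hsec : ∀ p ∈ O, p ≠ o_r → p ≤ o)
    (hoverlap : o_r - o < m) :
    O = {p : ℕ | ∃ i : ℕ, i * (o_r - o) ≤ o_r - 1 ∧ p = o_r - i * (o_r - o)} :=
  occurrences_arith_progression_general S P L m O hL2m hprefix hO o_r o hor ho holt hsec
end

section
/- Let S be a string whose substring S[x..y] is q-periodic (q ≥ 1). Let x ≤ u ≤ v ≤ y be such that S[u..v] is a palindrome and such that u+q ≥ x and v+q ≤ y. Then S[u+q..v+q] is also a palindrome. -/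
theorem eq_add_of_eq_of_periodicOn {α : Type*} {S : ℕ → α} {x y q i j : ℕ}
    (hper : ∀ t, x ≤ t → t + q ≤ y → S t = S (t + q))
    (hxi : x ≤ i) (hiy : i + q ≤ y) (hxj : x ≤ j) (hjy : j + q ≤ y) (hij : S i = S j) :
    S (i + q) = S (j + q) := by
  rw [← hper i hxi hiy, ← hper j hxj hjy, hij]

theorem palindrome_shift_in_periodic_general {α : Type*} (S : ℕ → α) (x y q u v : ℕ)
    (hper : ∀ t, x ≤ t → t + q ≤ y → S t = S (t + q))
    (hxu : x ≤ u) (huv : u ≤ v)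
    (hpal : ∀ t, 1 ≤ t → t ≤ v - u + 1 → S (u + t - 1) = S (v + 1 - t))
    (hvqy : v + q ≤ y) :
    ∀ t, 1 ≤ t → t ≤ v - u + 1 → S (u + q + t - 1) = S (v + q + 1 - t) := by
  intro t ht1 ht2
  rw [show u + q + t - 1 = u + t - 1 + q by omega, show v + q + 1 - t = v + 1 - t + q by omega]
  exact eq_add_of_eq_of_periodicOn hper (by omega) (by omega) (by omega) (by omega)
    (hpal t ht1 ht2)

/-- In a `q`-periodic region `S[x..y]`, shifting a palindrome `S[u..v]` by `q`
(staying inside the region) yields another palindrome `S[u+q..v+q]`. -/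
theorem palindrome_shift_in_periodic {α : Type*} (S : ℕ → α) (n x y q u v : ℕ)
    (hq : 1 ≤ q) (hx : 1 ≤ x) (hyn : y ≤ n)
    (hper : ∀ t, x ≤ t → t + q ≤ y → S t = S (t + q))
    (hxu : x ≤ u) (huv : u ≤ v) (hvy : v ≤ y)
    (hpal : ∀ t, 1 ≤ t → t ≤ v - u + 1 → S (u + t - 1) = S (v + 1 - t))
    (huqx : x ≤ u + q) (hvqy : v + q ≤ y) :
    ∀ t, 1 ≤ t → t ≤ v - u + 1 → S (u + q + t - 1) = S (v + q + 1 - t) :=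
  palindrome_shift_in_periodic_general S x y q u v hper hxu huv hpal hvqy
end

section
/- For all natural numbers n ≥ 1, m ≤ n and r ≤ n with r·m ≤ n, the inequality C(n−m, r) / C(n, r) ≤ 1 − (r·m)/(2n) holds (as real numbers), where C(a,b) denotes the binomial coefficient. -/
/-!
Each factor `(n - m - i) / (n - i)` of `C(n-m, r) / C(n, r)` is at most `1 - m/n`, so the ratio
is at most `(1 - m/n)^r`; as long as `r·(m/n) ≤ 1` this power stays below the linear
bound `1 - r·(m/n)/2`.
-/

namespace Nat

theorem sub_mul_le_sub_mul_of_le {a b : ℕ} (h : a ≤ b) (k : ℕ) : (a - k) * b ≤ (b - k) * a := by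
  rw [Nat.sub_mul, Nat.sub_mul, Nat.mul_comm b a]
  exact Nat.sub_le_sub_left (Nat.mul_le_mul_left k h) _

theorem descFactorial_mul_pow_le_of_le {a b : ℕ} (h : a ≤ b) (r : ℕ) :
    a.descFactorial r * b ^ r ≤ b.descFactorial r * a ^ r := by
  induction r with
  | zero => simp
  | succ r ih =>
    calc a.descFactorial (r + 1) * b ^ (r + 1)
        = (a.descFactorial r * b ^ r) * ((a - r) * b) := by
          rw [descFactorial_succ, pow_succ]; ring
      _ ≤ (b.descFactorial r * a ^ r) * ((b - r) * a) :=
          Nat.mul_le_mul ih (sub_mul_le_sub_mul_of_le h r)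
      _ = b.descFactorial (r + 1) * a ^ (r + 1) := by
          rw [descFactorial_succ, pow_succ]; ring

theorem choose_mul_pow_le_of_le {a b : ℕ} (h : a ≤ b) (r : ℕ) :
    a.choose r * b ^ r ≤ b.choose r * a ^ r := by
  have := descFactorial_mul_pow_le_of_le h r
  rw [descFactorial_eq_factorial_mul_choose, descFactorial_eq_factorial_mul_choose,
    Nat.mul_assoc, Nat.mul_assoc] at this
  exact Nat.le_of_mul_le_mul_left this r.factorial_pos

end Nat

theorem choose_sub_div_choose_le_pow {n : ℕ} (hn : 0 < n) {m : ℕ} (hm : m ≤ n) (r : ℕ) :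
    ((n - m).choose r : ℝ) / n.choose r ≤ (1 - (m : ℝ) / n) ^ r := by
  have hn' : (0 : ℝ) < n := by exact_mod_cast hn
  have hsub : 1 - (m : ℝ) / n = ((n - m : ℕ) : ℝ) / n := by
    rw [Nat.cast_sub hm]; field_simp
  rw [hsub]
  apply div_le_of_le_mul₀ (by positivity) (by positivity)
  rw [div_pow, div_mul_eq_mul_div, le_div_iff₀ (by positivity), mul_comm _ (n.choose r : ℝ)]
  exact_mod_cast Nat.choose_mul_pow_le_of_le (Nat.sub_le n m) r

theorem one_sub_pow_le_one_sub_mul_div_two {x : ℝ} (hx : 0 ≤ x) {r : ℕ} (h : r * x ≤ 1) :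
    (1 - x) ^ r ≤ 1 - r * x / 2 := by
  induction r with
  | zero => simp
  | succ r ih =>
    push_cast at h
    have hrx : r * x ≤ 1 := by nlinarith
    calc (1 - x) ^ (r + 1) = (1 - x) ^ r * (1 - x) := pow_succ _ _
      _ ≤ (1 - r * x / 2) * (1 - x) := mul_le_mul_of_nonneg_right (ih hrx) (by nlinarith)
      _ ≤ 1 - ((r + 1 : ℕ) : ℝ) * x / 2 := by
          push_cast; nlinarith [mul_nonneg hx (sub_nonneg.2 hrx)]

theorem choose_avoid_ratio_le_linear_general (n m r : ℕ) (hn : 1 ≤ n) (hm : m ≤ n)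
    (hrm : r * m ≤ n) :
    ((n - m).choose r : ℝ) / (n.choose r : ℝ) ≤
      1 - ((r : ℝ) * (m : ℝ)) / (2 * (n : ℝ)) := by
  have hn' : (0 : ℝ) < n := by exact_mod_cast hn
  have hrx : (r : ℝ) * ((m : ℝ) / n) ≤ 1 := by
    rw [mul_div_assoc', div_le_one hn']
    exact_mod_cast hrm
  calc ((n - m).choose r : ℝ) / n.choose r ≤ (1 - (m : ℝ) / n) ^ r :=
        choose_sub_div_choose_le_pow hn hm r
    _ ≤ 1 - r * ((m : ℝ) / n) / 2 := one_sub_pow_le_one_sub_mul_div_two (by positivity) hrx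
    _ = 1 - ((r : ℝ) * (m : ℝ)) / (2 * (n : ℝ)) := by ring

/-- For `n ≥ 1`, `m ≤ n`, `r ≤ n` with `r·m ≤ n`, the fraction of `r`-subsets of
an `n`-set avoiding a fixed `m`-set satisfies
`C(n-m, r) / C(n, r) ≤ 1 - (r·m)/(2n)`. -/
theorem choose_avoid_ratio_le_linear (n m r : ℕ) (hn : 1 ≤ n) (hm : m ≤ n)
    (hr : r ≤ n) (hrm : r * m ≤ n) :
    ((n - m).choose r : ℝ) / (n.choose r : ℝ) ≤
      1 - ((r : ℝ) * (m : ℝ)) / (2 * (n : ℝ)) :=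
  choose_avoid_ratio_le_linear_general n m r hn hm hrm
end

section
/- Let N ≥ 1 and 1 ≤ r ≤ N be natural numbers, and let (i_1, j_1), …, (i_m, j_m) be m ≥ 1 pairs of elements of {1, …, N} such that i_1, …, i_m are pairwise distinct and r·m ≤ N. Then the number of pairs (R1, R2), where R1 and R2 are r-element subsets of {1, …, N}, such that i_k ∈ R1 and j_k ∈ R2 for some k, is at least (m·r²/(2N²)) · C(N, r)². -/
/-!
The sets `R1` meeting `I = {i k}` number `C(N, r) - C(N - m, r)`, and one containing `i k`
combines with each of the `C(N - 1, r - 1) = (r / N) C(N, r)` sets `R2` containing `j k`.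
Finally `C(N - m, r) ≤ (1 - r / N)^m C(N, r) ≤ (1 - m r / (2 N)) C(N, r)` because `m r ≤ N`.
-/

open Finset

section Counting

variable {α β : Type*}

theorem Finset.card_mul_le_card_filter_product {s : Finset α} {t : Finset β}
    (p : α × β → Prop) [DecidablePred p] {c : ℕ} (h : ∀ a ∈ s, c ≤ #{b ∈ t | p (a, b)}) :
    #s * c ≤ #{x ∈ s ×ˢ t | p x} :=
  calc #s * c = ∑ _a ∈ s, c := by rw [sum_const, smul_eq_mul]
    _ ≤ ∑ a ∈ s, #{b ∈ t | p (a, b)} := sum_le_sum h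
    _ = #{x ∈ s ×ˢ t | p x} := by simp only [card_filter, sum_product]

variable [DecidableEq α]

theorem Finset.filter_disjoint_powersetCard (s t : Finset α) (r : ℕ) :
    {R ∈ s.powersetCard r | Disjoint R t} = (s \ t).powersetCard r := by
  ext R
  simp only [mem_filter, mem_powersetCard, subset_sdiff]
  tauto

theorem Finset.card_filter_not_disjoint_powersetCard_add {s t : Finset α} (h : t ⊆ s) (r : ℕ) :
    #{R ∈ s.powersetCard r | ¬Disjoint R t} + (#s - #t).choose r = (#s).choose r := by
  rw [← card_sdiff_of_subset h, ← card_powersetCard, ← filter_disjoint_powersetCard, add_comm,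
    card_filter_add_card_filter_not, card_powersetCard]

theorem Finset.card_filter_mem_powersetCard {s : Finset α} {a : α} {r : ℕ} (ha : a ∈ s)
    (hr : 1 ≤ r) : #{R ∈ s.powersetCard r | a ∈ R} = (#s - 1).choose (r - 1) := by
  simpa [singleton_subset_iff] using
    card_filter_powersetCard_subset {a} s r (singleton_subset_iff.2 ha) (by simpa using hr)

end Counting

theorem Nat.sub_mul_le_sub_mul {a n : ℕ} (r : ℕ) (h : a ≤ n) : (a - r) * n ≤ (n - r) * a := by
  rw [Nat.sub_mul, Nat.sub_mul, mul_comm n a]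
  exact Nat.sub_le_sub_left (Nat.mul_le_mul_left r h) _

theorem Nat.choose_pred_mul_le {a n : ℕ} (r : ℕ) (h : a ≤ n) :
    (a - 1).choose r * n ≤ a.choose r * (n - r) := by
  rcases a with _ | a
  · rcases r with _ | r <;> simp
  refine Nat.le_of_mul_le_mul_right ?_ a.succ_pos
  calc (a + 1 - 1).choose r * n * (a + 1) = (a + 1).choose r * ((a + 1 - r) * n) := by
        rw [Nat.add_sub_cancel, mul_right_comm, Nat.choose_mul_succ_eq, mul_assoc]
    _ ≤ (a + 1).choose r * ((n - r) * (a + 1)) :=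
        Nat.mul_le_mul_left _ (Nat.sub_mul_le_sub_mul r h)
    _ = (a + 1).choose r * (n - r) * (a + 1) := by rw [mul_assoc]

theorem Nat.choose_sub_mul_pow_le (n m r : ℕ) :
    (n - m).choose r * n ^ m ≤ n.choose r * (n - r) ^ m := by
  induction m with
  | zero => simp
  | succ m ih =>
    calc (n - (m + 1)).choose r * n ^ (m + 1) = (n - m - 1).choose r * n * n ^ m := by
          rw [Nat.sub_sub, pow_succ]; ring
      _ ≤ (n - m).choose r * (n - r) * n ^ m :=
          Nat.mul_le_mul_right _ (Nat.choose_pred_mul_le r (Nat.sub_le n m))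
      _ = (n - m).choose r * n ^ m * (n - r) := by ring
      _ ≤ n.choose r * (n - r) ^ m * (n - r) := Nat.mul_le_mul_right _ ih
      _ = n.choose r * (n - r) ^ (m + 1) := by ring

theorem Nat.mul_choose_pred_pred (n : ℕ) {k : ℕ} (hk : 1 ≤ k) :
    n * (n - 1).choose (k - 1) = k * n.choose k := by
  rcases n with _ | n
  · simp [Nat.choose_eq_zero_of_lt hk]
  simpa [Nat.sub_add_cancel hk, mul_comm k] using Nat.add_one_mul_choose_eq n (k - 1)

theorem one_sub_pow_le_one_sub_mul_div_two_s16 {K : Type*} [Field K] [LinearOrder K]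
    [IsStrictOrderedRing K] {t : K} {m : ℕ} (ht : 0 ≤ t) (hmt : m * t ≤ 1) :
    (1 - t) ^ m ≤ 1 - m * t / 2 := by
  rcases m.eq_zero_or_pos with rfl | hm
  · simp
  have ht1 : t ≤ 1 := (le_mul_of_one_le_left ht (by exact_mod_cast hm)).trans hmt
  have hnonneg : 0 ≤ (1 - t) ^ m := pow_nonneg (sub_nonneg.2 ht1) m
  -- `(1 - t)^m ≤ 1 / (1 + m t)` by Bernoulli applied to `(1 + t)^m`
  have hbernoulli : 1 + m * t ≤ (1 + t) ^ m := one_add_mul_le_pow (by linarith) m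
  have hprod : (1 - t) ^ m * (1 + t) ^ m ≤ 1 := by
    rw [← mul_pow]
    exact pow_le_one₀ (by nlinarith) (by nlinarith)
  nlinarith [mul_le_mul_of_nonneg_left hbernoulli hnonneg, mul_nonneg (mul_nonneg
    (Nat.cast_nonneg (α := K) m) ht) (sub_nonneg.2 hmt)]

theorem mul_div_mul_choose_add_choose_sub_le {n m r : ℕ} (hrn : r ≤ n) (hmr : m * r ≤ n) :
    (m * r / (2 * n) : ℝ) * n.choose r + (n - m).choose r ≤ n.choose r := by
  rcases n.eq_zero_or_pos with rfl | hn
  · simp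
  have hn' : (0 : ℝ) < n := by exact_mod_cast hn
  have hratio : ((n - m).choose r : ℝ) ≤ n.choose r * (1 - r / n) ^ m := by
    rw [one_sub_div hn'.ne', div_pow, mul_div_assoc', le_div_iff₀ (by positivity),
      ← Nat.cast_sub hrn]
    exact_mod_cast Nat.choose_sub_mul_pow_le n m r
  have hpow : (1 - r / n : ℝ) ^ m ≤ 1 - m * (r / n) / 2 :=
    one_sub_pow_le_one_sub_mul_div_two_s16 (by positivity)
      (by rw [mul_div_assoc', div_le_one hn']; exact_mod_cast hmr)
  have := mul_le_mul_of_nonneg_left hpow (Nat.cast_nonneg (α := ℝ) (n.choose r))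
  have hrw : (m * r / (2 * n) : ℝ) = m * (r / n) / 2 := by ring
  rw [hrw]
  linarith

theorem marked_pairs_count_ge_of_many_general {N r m : ℕ} (hN : 1 ≤ N) (hr1 : 1 ≤ r)
    (hrN : r ≤ N) (i j : Fin m → ℕ)
    (hiN : ∀ k, i k ∈ Finset.Icc 1 N) (hjN : ∀ k, j k ∈ Finset.Icc 1 N)
    (hinj : Function.Injective i) (hrm : r * m ≤ N) :
    ((m : ℝ) * (r : ℝ) ^ 2 / (2 * (N : ℝ) ^ 2)) * ((N.choose r : ℝ)) ^ 2 ≤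
      ((((Finset.Icc 1 N).powersetCard r ×ˢ (Finset.Icc 1 N).powersetCard r).filter
        (fun RR => ∃ k, i k ∈ RR.1 ∧ j k ∈ RR.2)).card : ℝ) := by
  set P := (Icc 1 N).powersetCard r
  set I := univ.image i
  have hS : #(Icc 1 N) = N := by simp
  have hIS : I ⊆ Icc 1 N := by simpa [I, image_subset_iff] using hiN
  have hI : #I = m := by simp [I, card_image_of_injective _ hinj]
  -- a set `R1` meeting `I` at `i k` pairs with every `R2 ∋ j k`
  have hcount : #{R ∈ P | ¬Disjoint R I} * (N - 1).choose (r - 1) ≤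
      #{RR ∈ P ×ˢ P | ∃ k, i k ∈ RR.1 ∧ j k ∈ RR.2} := by
    refine (card_mul_le_card_filter_product _ fun R hR => ?_).trans
      (card_le_card (filter_subset_filter _ (product_subset_product_left (filter_subset _ _))))
    obtain ⟨x, hxR, hxI⟩ := not_disjoint_iff.1 (mem_filter.1 hR).2
    obtain ⟨k, -, rfl⟩ := mem_image.1 hxI
    rw [← hS, ← card_filter_mem_powersetCard (hjN k) hr1]
    exact card_le_card (monotone_filter_right _ fun _ _ h => ⟨k, hxR, h⟩)
  have hmeet : (#{R ∈ P | ¬Disjoint R I} : ℝ) + (N - m).choose r = N.choose r := by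
    exact_mod_cast hS ▸ hI ▸ card_filter_not_disjoint_powersetCard_add hIS r
  have hgap := mul_div_mul_choose_add_choose_sub_le hrN (by rwa [mul_comm] at hrm)
  have hpascal : (N : ℝ) * (N - 1).choose (r - 1) = r * N.choose r := by
    exact_mod_cast Nat.mul_choose_pred_pred N hr1
  have hN' : (N : ℝ) ≠ 0 := by positivity
  calc (m : ℝ) * r ^ 2 / (2 * N ^ 2) * N.choose r ^ 2
      = (m * r / (2 * N) * N.choose r) * (r * N.choose r / N) := by field_simp
    _ = (m * r / (2 * N) * N.choose r) * (N - 1).choose (r - 1) := by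
        rw [← hpascal, mul_div_cancel_left₀ _ hN']
    _ ≤ #{R ∈ P | ¬Disjoint R I} * (N - 1).choose (r - 1) := by gcongr; linarith
    _ ≤ _ := by exact_mod_cast hcount

/-- Let `1 ≤ r ≤ N` and let `(i k, j k)`, `k : Fin m` (`m ≥ 1`), be pairs of
elements of `{1, …, N}` with the `i k` pairwise distinct and `r·m ≤ N`. Then the
number of pairs `(R1, R2)` of `r`-element subsets of `{1, …, N}` with
`i k ∈ R1` and `j k ∈ R2` for some `k` is at least `(m·r²/(2N²))·C(N, r)²`. -/
theorem marked_pairs_count_ge_of_many {N r m : ℕ} (hN : 1 ≤ N) (hr1 : 1 ≤ r)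
    (hrN : r ≤ N) (hm : 1 ≤ m) (i j : Fin m → ℕ)
    (hiN : ∀ k, i k ∈ Finset.Icc 1 N) (hjN : ∀ k, j k ∈ Finset.Icc 1 N)
    (hinj : Function.Injective i) (hrm : r * m ≤ N) :
    ((m : ℝ) * (r : ℝ) ^ 2 / (2 * (N : ℝ) ^ 2)) * ((N.choose r : ℝ)) ^ 2 ≤
      ((((Finset.Icc 1 N).powersetCard r ×ˢ (Finset.Icc 1 N).powersetCard r).filter
        (fun RR => ∃ k, i k ∈ RR.1 ∧ j k ∈ RR.2)).card : ℝ) :=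
  marked_pairs_count_ge_of_many_general hN hr1 hrN i j hiN hjN hinj hrm
end

section
/- For all real numbers q, η, p with 0 < q ≤ 1, 0 < η ≤ 1 and 0 ≤ p ≤ (1−η)·q, the strict inequality p + (π·η/10)·√(p(1−p))·√q + (π²·η²/400)·q < (1 − η/2)·q holds. -/
open Real

/-! Bound `√(p(1-p))·√q ≤ q` (as `p(1-p) ≤ p ≤ q`), so the left side is at most
`(1-η)q + ηq·(π/10 + π²η/400)`; the bracket stays below `1/2` because `π < 3.15` and `η ≤ 1`. -/

theorem sqrt_mul_one_sub_le_sqrt {a b : ℝ} (h : a ≤ b) : √(a * (1 - a)) ≤ √b :=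
  Real.sqrt_le_sqrt (by nlinarith [sq_nonneg a])

theorem sqrt_mul_one_sub_mul_sqrt_le {a b : ℝ} (h : a ≤ b) (hb : 0 ≤ b) :
    √(a * (1 - a)) * √b ≤ b :=
  calc √(a * (1 - a)) * √b ≤ √b * √b :=
        mul_le_mul_of_nonneg_right (sqrt_mul_one_sub_le_sqrt h) (Real.sqrt_nonneg b)
    _ = b := Real.mul_self_sqrt hb

theorem pi_div_ten_add_pi_sq_mul_div_lt_half {η : ℝ} (hη : η ≤ 1) :
    π / 10 + π ^ 2 * η / 400 < 1 / 2 := by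
  have hπ : π < 3.15 := Real.pi_lt_d2
  have hπη : π ^ 2 * η ≤ π ^ 2 := mul_le_of_le_one_right (sq_nonneg π) hη
  nlinarith [Real.pi_pos]

theorem amplitude_estimate_small_case_general (q η p : ℝ) (hq0 : 0 < q)
    (hη0 : 0 < η) (hη1 : η ≤ 1) (hp : p ≤ (1 - η) * q) :
    p + (π * η / 10) * Real.sqrt (p * (1 - p)) * Real.sqrt q +
        (π ^ 2 * η ^ 2 / 400) * q < (1 - η / 2) * q := by
  have hpq : p ≤ q := hp.trans (by linarith [mul_pos hη0 hq0])
  have hcross : π * η / 10 * (√(p * (1 - p)) * √q) ≤ π * η / 10 * q :=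
    mul_le_mul_of_nonneg_left (sqrt_mul_one_sub_mul_sqrt_le hpq hq0.le) (by positivity)
  have hbracket : (π / 10 + π ^ 2 * η / 400) * (η * q) < 1 / 2 * (η * q) :=
    mul_lt_mul_of_pos_right (pi_div_ten_add_pi_sq_mul_div_lt_half hη1) (mul_pos hη0 hq0)
  calc p + (π * η / 10) * √(p * (1 - p)) * √q + (π ^ 2 * η ^ 2 / 400) * q
      ≤ (1 - η) * q + (π / 10 + π ^ 2 * η / 400) * (η * q) := by linarith
    _ < (1 - η) * q + 1 / 2 * (η * q) := by linarith
    _ = (1 - η / 2) * q := by ring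

/-- For `0 < q ≤ 1`, `0 < η ≤ 1` and `0 ≤ p ≤ (1-η)q`,
`p + (πη/10)√(p(1-p))√q + (π²η²/400)q < (1 - η/2)q`. -/
theorem amplitude_estimate_small_case (q η p : ℝ) (hq0 : 0 < q) (hq1 : q ≤ 1)
    (hη0 : 0 < η) (hη1 : η ≤ 1) (hp0 : 0 ≤ p) (hp : p ≤ (1 - η) * q) :
    p + (π * η / 10) * Real.sqrt (p * (1 - p)) * Real.sqrt q +
        (π ^ 2 * η ^ 2 / 400) * q < (1 - η / 2) * q :=
  amplitude_estimate_small_case_general q η p hq0 hη0 hη1 hp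
end

section
/- For all real numbers q, η, p with 0 < q ≤ 1, 0 < η ≤ 1 and q ≤ p ≤ 1, the strict inequality p − (π·η/10)·√(p(1−p))·√q − (π²·η²/400)·q > (1 − η/2)·q holds. -/
open Real

/-! With `a = πη/20` the left side is `p - 2a√(p(1-p))√q - a²q ≥ p - 2a√p√q - a²q`, and as a
function of `x = √p` this is increasing for `x ≥ a√q`; since `√p ≥ √q ≥ a√q` it is at least its
value `(1 - 2a - a²)q` at `p = q`. Finally `2a + a² < η/2` because `π/10 + π²/400 < 1/2`. -/

theorem one_sub_two_mul_sub_sq_mul_le_sub_mul_sqrt_mul_sqrt {a p q : ℝ} (ha0 : 0 ≤ a)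
    (ha1 : a ≤ 1) (hq : 0 ≤ q) (hqp : q ≤ p) :
    (1 - 2 * a - a ^ 2) * q ≤ p - 2 * a * √p * √q - a ^ 2 * q := by
  have hxy : √q ≤ √p := Real.sqrt_le_sqrt hqp
  have hy : 0 ≤ √q := Real.sqrt_nonneg q
  have hp : √p ^ 2 = p := Real.sq_sqrt (hq.trans hqp)
  have hq' : √q ^ 2 = q := Real.sq_sqrt hq
  -- the difference of the two sides factors as `(x - y)(x + y - 2ay)` with `x = √p`, `y = √q`
  have hfac : 0 ≤ (√p - √q) * (√p + √q - 2 * a * √q) :=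
    mul_nonneg (by linarith) (by nlinarith)
  nlinarith

theorem one_sub_two_mul_sub_sq_mul_le {a p q : ℝ} (ha0 : 0 ≤ a) (ha1 : a ≤ 1) (hq : 0 ≤ q)
    (hqp : q ≤ p) :
    (1 - 2 * a - a ^ 2) * q ≤ p - 2 * a * √(p * (1 - p)) * √q - a ^ 2 * q :=
  calc (1 - 2 * a - a ^ 2) * q ≤ p - 2 * a * √p * √q - a ^ 2 * q :=
        one_sub_two_mul_sub_sq_mul_le_sub_mul_sqrt_mul_sqrt ha0 ha1 hq hqp
    _ ≤ p - 2 * a * √(p * (1 - p)) * √q - a ^ 2 * q := by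
        gcongr
        nlinarith [sq_nonneg p]

theorem pi_mul_div_twenty_le_one {η : ℝ} (hη0 : 0 ≤ η) (hη1 : η ≤ 1) : π * η / 20 ≤ 1 := by
  nlinarith [Real.pi_lt_d2]

theorem two_mul_pi_mul_div_twenty_add_sq_lt {η : ℝ} (hη0 : 0 < η) (hη1 : η ≤ 1) :
    2 * (π * η / 20) + (π * η / 20) ^ 2 < η / 2 := by
  have hπ := Real.pi_lt_d2
  have hπ2 : π ^ 2 < 10 := by nlinarith [Real.pi_pos]
  have hη2 : η ^ 2 ≤ η := by nlinarith
  nlinarith [mul_le_mul_of_nonneg_left hη2 (sq_nonneg π)]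

theorem amplitude_estimate_large_case_general (q η p : ℝ) (hq0 : 0 < q)
    (hη0 : 0 < η) (hη1 : η ≤ 1) (hqp : q ≤ p) :
    p - (π * η / 10) * Real.sqrt (p * (1 - p)) * Real.sqrt q -
        (π ^ 2 * η ^ 2 / 400) * q > (1 - η / 2) * q := by
  have hsmall := two_mul_pi_mul_div_twenty_add_sq_lt hη0 hη1
  have hlower := one_sub_two_mul_sub_sq_mul_le (by positivity)
    (pi_mul_div_twenty_le_one hη0.le hη1) hq0.le hqp
  calc (1 - η / 2) * q < (1 - 2 * (π * η / 20) - (π * η / 20) ^ 2) * q :=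
        mul_lt_mul_of_pos_right (by linarith) hq0
    _ ≤ p - 2 * (π * η / 20) * √(p * (1 - p)) * √q - (π * η / 20) ^ 2 * q := hlower
    _ = p - (π * η / 10) * √(p * (1 - p)) * √q - (π ^ 2 * η ^ 2 / 400) * q := by ring

/-- For `0 < q ≤ 1`, `0 < η ≤ 1` and `q ≤ p ≤ 1`,
`p - (πη/10)√(p(1-p))√q - (π²η²/400)q > (1 - η/2)q`. -/
theorem amplitude_estimate_large_case (q η p : ℝ) (hq0 : 0 < q) (hq1 : q ≤ 1)
    (hη0 : 0 < η) (hη1 : η ≤ 1) (hqp : q ≤ p) (hp1 : p ≤ 1) :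
    p - (π * η / 10) * Real.sqrt (p * (1 - p)) * Real.sqrt q -
        (π ^ 2 * η ^ 2 / 400) * q > (1 - η / 2) * q :=
  amplitude_estimate_large_case_general q η p hq0 hη0 hη1 hqp
end
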